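/- arXiv:1011.0067 — 3 statements merged into one kernel-verified Lean document; each statement's English description precedes it below -/
import Mathlib

section
/- For all 0 ≤ t < T one has E(t,0) − Γ(0,t)ᵀ (Γ(0,T)ᵀ)⁻¹ E(T,0) = Γ(t,T) Γ(0,T)⁻¹. -/
open MeasureTheory Matrix Topology Filter

attribute [local instance] Matrix.normedAddCommGroup Matrix.normedSpace

/-!
Since `E(T,u) = E(T,t) E(t,u)`, splitting the integral defining `κ(0,T)` at `t` gives
`κ(0,T) = E(T,t) κ(0,t) E(T,t)ᵀ + κ(t,T)`. Multiply the left-hand side on the right by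
`Γ(0,T) = E(0,T) κ(0,T)`: the cocycle law and the symmetry of `κ` turn the subtracted term into
`κ(0,t) E(T,t)ᵀ`, while `E(t,0) Γ(0,T) = E(t,T) κ(0,T)` is `κ(0,t) E(T,t)ᵀ + Γ(t,T)` by the
splitting formula. The difference is `Γ(t,T)`.
-/

-- Instance search cannot see through the local instance `Matrix.normedAddCommGroup` that the
-- norm topology is `instTopologicalSpaceMatrix`, so `IntervalIntegrable` needs this bridge.
instance Matrix.instENormedAddMonoidReal {m n : Type*} [Fintype m] [Fintype n] :
    ENormedAddMonoid (Matrix m n ℝ) :=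
  NormedAddCommGroup.toENormedAddCommMonoid.toENormedAddMonoid

theorem Matrix.intervalIntegral_mul_mul {l m n o : Type*} [Fintype l] [Fintype m] [Fintype n]
    [Fintype o] (A : Matrix l m ℝ) (B : Matrix n o ℝ) {f : ℝ → Matrix m n ℝ} {a b : ℝ}
    (hf : IntervalIntegrable f volume a b) :
    ∫ u in a..b, A * f u * B = A * (∫ u in a..b, f u) * B := by
  let L : Matrix m n ℝ →L[ℝ] Matrix l o ℝ := LinearMap.toContinuousLinearMap
    { toFun := fun X => A * X * B
      map_add' := fun X Y => by simp only [Matrix.mul_add, Matrix.add_mul]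
      map_smul' := fun c X => by simp only [Matrix.mul_smul, Matrix.smul_mul, RingHom.id_apply] }
  exact L.intervalIntegral_comp_comm hf

section Evolution

variable {n q : Type*} [Fintype n] [Fintype q] {E : ℝ → ℝ → Matrix n n ℝ}

theorem integral_conj_evolution_split {S : ℝ → Matrix n q ℝ} (hS : ContinuousOn S (Set.Ici 0))
    (hEcont : ContinuousOn (fun x : ℝ × ℝ => E x.1 x.2) (Set.Ici 0 ×ˢ Set.Ici 0))
    (hEmul : ∀ r s t : ℝ, 0 ≤ r → 0 ≤ s → 0 ≤ t → E t s * E s r = E t r)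
    {s t T : ℝ} (hs : 0 ≤ s) (hst : s ≤ t) (htT : t ≤ T) :
    ∫ u in s..T, E T u * S u * (S u)ᵀ * (E T u)ᵀ =
      E T t * (∫ u in s..t, E t u * S u * (S u)ᵀ * (E t u)ᵀ) * (E T t)ᵀ +
        ∫ u in t..T, E T u * S u * (S u)ᵀ * (E T u)ᵀ := by
  have ht : 0 ≤ t := hs.trans hst
  have hT : 0 ≤ T := ht.trans htT
  have hint : ∀ a, 0 ≤ a → ∀ b c, s ≤ b → b ≤ c →
      IntervalIntegrable (fun u => E a u * S u * (S u)ᵀ * (E a u)ᵀ) volume b c := by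
    intro a ha b c hsb hbc
    have hEa : ContinuousOn (E a) (Set.Ici 0) :=
      hEcont.comp (Continuous.prodMk_right a).continuousOn fun u hu => ⟨ha, hu⟩
    have hK : ContinuousOn (fun u => E a u * S u * (S u)ᵀ * (E a u)ᵀ) (Set.Ici 0) := by fun_prop
    refine (hK.mono ?_).intervalIntegrable
    rw [Set.uIcc_of_le hbc]
    exact Set.Icc_subset_Ici_self.trans (Set.Ici_subset_Ici.mpr (hs.trans hsb))
  have hfactor : ∀ u ∈ Set.uIcc s t, E T u * S u * (S u)ᵀ * (E T u)ᵀ =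
      E T t * (E t u * S u * (S u)ᵀ * (E t u)ᵀ) * (E T t)ᵀ := by
    intro u hu
    rw [Set.uIcc_of_le hst] at hu
    rw [← hEmul u t T (hs.trans hu.1) ht hT]
    simp only [transpose_mul, Matrix.mul_assoc]
  rw [← intervalIntegral.integral_add_adjacent_intervals (hint T hT s t le_rfl hst)
      (hint T hT t T hst htT), intervalIntegral.integral_congr hfactor,
    Matrix.intervalIntegral_mul_mul _ _ (hint t ht s t le_rfl hst)]

variable [DecidableEq n]

theorem evolution_mul_evolution_swap (hEid : ∀ t : ℝ, 0 ≤ t → E t t = 1)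
    (hEmul : ∀ r s t : ℝ, 0 ≤ r → 0 ≤ s → 0 ≤ t → E t s * E s r = E t r)
    {s t : ℝ} (hs : 0 ≤ s) (ht : 0 ≤ t) : E t s * E s t = 1 := by
  rw [hEmul t s t ht hs ht, hEid t ht]

theorem inv_transpose_evolution_mul (hEid : ∀ t : ℝ, 0 ≤ t → E t t = 1)
    (hEmul : ∀ r s t : ℝ, 0 ≤ r → 0 ≤ s → 0 ≤ t → E t s * E s r = E t r)
    {s T : ℝ} (hs : 0 ≤ s) (hT : 0 ≤ T) {K : Matrix n n ℝ} (hK : Kᵀ = K) (hdet : IsUnit K.det) :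
    ((E s T * K)ᵀ)⁻¹ = (E T s)ᵀ * K⁻¹ := by
  apply Matrix.inv_eq_right_inv
  rw [transpose_mul, hK, Matrix.mul_assoc, ← Matrix.mul_assoc (E s T)ᵀ, ← transpose_mul,
    evolution_mul_evolution_swap hEid hEmul hs hT, transpose_one, Matrix.one_mul,
    mul_nonsing_inv _ hdet]

theorem evolution_sub_gramian_eq (hEid : ∀ t : ℝ, 0 ≤ t → E t t = 1)
    (hEmul : ∀ r s t : ℝ, 0 ≤ r → 0 ≤ s → 0 ≤ t → E t s * E s r = E t r)
    {s t T : ℝ} (hs : 0 ≤ s) (ht : 0 ≤ t) (hT : 0 ≤ T) {Kst KsT KtT : Matrix n n ℝ}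
    (hsplit : KsT = E T t * Kst * (E T t)ᵀ + KtT) (hKst : Kstᵀ = Kst) (hKsT : KsTᵀ = KsT)
    (hdet : IsUnit KsT.det) :
    E t s - (E s t * Kst)ᵀ * ((E s T * KsT)ᵀ)⁻¹ * E T s = E t T * KtT * (E s T * KsT)⁻¹ := by
  have hΓdet : IsUnit (E s T * KsT).det := by
    rw [det_mul]
    exact (isUnit_det_of_right_inverse (evolution_mul_evolution_swap hEid hEmul hT hs)).mul hdet
  have hsecond : (E s t * Kst)ᵀ * ((E s T * KsT)ᵀ)⁻¹ * E T s * (E s T * KsT) =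
      Kst * (E T t)ᵀ := by
    rw [inv_transpose_evolution_mul hEid hEmul hs hT hKsT hdet, transpose_mul, hKst]
    simp only [Matrix.mul_assoc]
    rw [← Matrix.mul_assoc (E T s) (E s T), evolution_mul_evolution_swap hEid hEmul hs hT,
      Matrix.one_mul, nonsing_inv_mul _ hdet, Matrix.mul_one, ← transpose_mul,
      hEmul t s T ht hs hT]
  have hfirst : E t s * (E s T * KsT) = Kst * (E T t)ᵀ + E t T * KtT := by
    rw [← Matrix.mul_assoc, hEmul T s t hT hs ht, hsplit, Matrix.mul_add, ← Matrix.mul_assoc,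
      ← Matrix.mul_assoc, evolution_mul_evolution_swap hEid hEmul hT ht, Matrix.one_mul]
  have hkey : (E t s - (E s t * Kst)ᵀ * ((E s T * KsT)ᵀ)⁻¹ * E T s) * (E s T * KsT) =
      E t T * KtT := by
    rw [Matrix.sub_mul, hsecond, hfirst, add_sub_cancel_left]
  rw [← hkey, mul_nonsing_inv_cancel_right _ _ hΓdet]

end Evolution

theorem evolution_gamma_identity_general
    {d p : ℕ}
    (S : ℝ → Matrix (Fin d) (Fin p) ℝ)
    (hS : ContinuousOn S (Set.Ici 0))
    (E : ℝ → ℝ → Matrix (Fin d) (Fin d) ℝ)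
    (hEcont : ContinuousOn (fun x : ℝ × ℝ => E x.1 x.2) (Set.Ici 0 ×ˢ Set.Ici 0))
    (hEid : ∀ t : ℝ, 0 ≤ t → E t t = 1)
    (hEmul : ∀ r s t : ℝ, 0 ≤ r → 0 ≤ s → 0 ≤ t → E t s * E s r = E t r)
    (κ Γ : ℝ → ℝ → Matrix (Fin d) (Fin d) ℝ)
    (hκ : ∀ s t : ℝ, 0 ≤ s → s ≤ t →
      κ s t = ∫ u in s..t, E t u * S u * (S u)ᵀ * (E t u)ᵀ)
    (hΓ : ∀ s t : ℝ, 0 ≤ s → s ≤ t → Γ s t = E s t * κ s t)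
    (T : ℝ) (hT : 0 < T)
    (hκpd : ∀ s t : ℝ, 0 ≤ s → s < t → (κ s t).IsSymm ∧ (κ s t).PosDef) :
    ∀ t : ℝ, 0 ≤ t → t < T →
      E t 0 - (Γ 0 t)ᵀ * ((Γ 0 T)ᵀ)⁻¹ * E T 0 = Γ t T * (Γ 0 T)⁻¹ := by
  intro t ht htT
  have hsplit : κ 0 T = E T t * κ 0 t * (E T t)ᵀ + κ t T := by
    rw [hκ 0 T le_rfl hT.le, hκ 0 t le_rfl ht, hκ t T ht htT.le]
    exact integral_conj_evolution_split hS hEcont hEmul le_rfl ht htT.le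
  have hsymm : (κ 0 t)ᵀ = κ 0 t := by
    rcases ht.eq_or_lt with rfl | htpos
    · rw [hκ 0 0 le_rfl le_rfl, intervalIntegral.integral_same, transpose_zero]
    · exact (hκpd 0 t le_rfl htpos).1
  obtain ⟨hsymmT, hposT⟩ := hκpd 0 T le_rfl hT
  rw [hΓ 0 t le_rfl ht, hΓ 0 T le_rfl hT.le, hΓ t T ht htT.le]
  exact evolution_sub_gramian_eq hEid hEmul le_rfl ht hT.le hsplit hsymm hsymmT
    hposT.det_pos.ne'.isUnit

/-- Lemma 3(c): for `0 ≤ t < T`,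
`E(t,0) − Γ(0,t)ᵀ (Γ(0,T)ᵀ)⁻¹ E(T,0) = Γ(t,T) Γ(0,T)⁻¹`. -/
theorem evolution_gamma_identity
    {d p : ℕ} (hd : 1 ≤ d)
    (Q : ℝ → Matrix (Fin d) (Fin d) ℝ) (S : ℝ → Matrix (Fin d) (Fin p) ℝ)
    (hQ : ContinuousOn Q (Set.Ici 0)) (hS : ContinuousOn S (Set.Ici 0))
    (E : ℝ → ℝ → Matrix (Fin d) (Fin d) ℝ)
    (hEcont : ContinuousOn (fun x : ℝ × ℝ => E x.1 x.2) (Set.Ici 0 ×ˢ Set.Ici 0))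
    (hEid : ∀ t : ℝ, 0 ≤ t → E t t = 1)
    (hEmul : ∀ r s t : ℝ, 0 ≤ r → 0 ≤ s → 0 ≤ t → E t s * E s r = E t r)
    (hEderiv : ∀ s : ℝ, 0 ≤ s → ∀ t : ℝ, 0 ≤ t →
      HasDerivAt (fun τ => E τ s) (Q t * E t s) t)
    (κ Γ : ℝ → ℝ → Matrix (Fin d) (Fin d) ℝ)
    (hκ : ∀ s t : ℝ, 0 ≤ s → s ≤ t →
      κ s t = ∫ u in s..t, E t u * S u * (S u)ᵀ * (E t u)ᵀ)
    (hΓ : ∀ s t : ℝ, 0 ≤ s → s ≤ t → Γ s t = E s t * κ s t)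
    (T : ℝ) (hT : 0 < T)
    (hκpd : ∀ s t : ℝ, 0 ≤ s → s < t → (κ s t).IsSymm ∧ (κ s t).PosDef) :
    ∀ t : ℝ, 0 ≤ t → t < T →
      E t 0 - (Γ 0 t)ᵀ * ((Γ 0 T)ᵀ)⁻¹ * E T 0 = Γ t T * (Γ 0 T)⁻¹ :=
  evolution_gamma_identity_general S hS E hEcont hEid hEmul κ Γ hκ hΓ T hT hκpd
end

section
/- For every t ∈ (0,T), the matrix-valued function τ ↦ Γ(0,τ) is differentiable at t with derivative ∂₂Γ(0,t) = Γ(0,t) Q(t)ᵀ + E(0,t) S(t)S(t)ᵀ. -/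
/-!
Because `E` is an evolution family, `E(τ,u) = E(τ,0) E(0,u)`, so the Kalman matrix factors as
`κ(0,τ) = E(τ,0) W(τ) E(τ,0)ᵀ` through the controllability Gramian
`W(τ) = ∫₀^τ E(0,u) S(u) S(u)ᵀ E(0,u)ᵀ du`. Hence `Γ(0,τ) = W(τ) E(τ,0)ᵀ`, and the product rule,
together with `W'(t) = E(0,t) S(t) S(t)ᵀ E(0,t)ᵀ` and `∂₁E(t,0) = Q(t) E(t,0)`, gives the formula
once `E(0,t)ᵀ E(t,0)ᵀ = 1` is used.
-/

open MeasureTheory Matrix Topology Filter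

attribute [local instance] Matrix.normedAddCommGroup Matrix.normedSpace

namespace Matrix

variable {l m n o : Type*} [Fintype l] [Fintype m] [Fintype n] [Fintype o]

noncomputable def mulCLM : Matrix l m ℝ →L[ℝ] Matrix m n ℝ →L[ℝ] Matrix l n ℝ :=
  LinearMap.toContinuousLinearMap
    ((LinearMap.toContinuousLinearMap : _ ≃ₗ[ℝ] _).toLinearMap ∘ₗ mulLinearMap ℝ)

-- Continuity rather than `IntervalIntegrable`: under the local sup norm on matrices the
-- `ENormedAddMonoid` instance that `IntervalIntegrable` needs cannot be synthesized.
theorem intervalIntegral_mul_mul_s9 (A : Matrix l m ℝ) (B : Matrix n o ℝ)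
    {f : ℝ → Matrix m n ℝ} {a b : ℝ} (hf : ContinuousOn f (Set.uIcc a b)) :
    ∫ u in a..b, A * f u * B = A * (∫ u in a..b, f u) * B :=
  ((mulCLM.flip B).comp (mulCLM A) : Matrix m n ℝ →L[ℝ] Matrix l o ℝ).intervalIntegral_comp_comm
    (hf.intervalIntegrable (μ := volume))

end Matrix

theorem HasDerivAt.matrix_mul {l m n : Type*} [Fintype l] [Fintype m] [Fintype n]
    {f : ℝ → Matrix l m ℝ} {g : ℝ → Matrix m n ℝ} {f' : Matrix l m ℝ} {g' : Matrix m n ℝ}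
    {x : ℝ} (hf : HasDerivAt f f' x) (hg : HasDerivAt g g' x) :
    HasDerivAt (fun τ => f τ * g τ) (f x * g' + f' * g x) x :=
  Matrix.mulCLM.hasDerivAt_of_bilinear (fun _ => hf) (fun _ => hg)

theorem HasDerivAt.matrix_transpose {m n : Type*} [Fintype m] [Fintype n] {f : ℝ → Matrix m n ℝ}
    {f' : Matrix m n ℝ} {x : ℝ} (hf : HasDerivAt f f' x) :
    HasDerivAt (fun τ => (f τ)ᵀ) f'ᵀ x :=
  (transposeLinearEquiv m n ℝ ℝ).toContinuousLinearEquiv.hasFDerivAt.comp_hasDerivAt x hf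

theorem ContinuousOn.matrix_mul {X l m n : Type*} [TopologicalSpace X] [Fintype m]
    {f : X → Matrix l m ℝ} {g : X → Matrix m n ℝ} {s : Set X}
    (hf : ContinuousOn f s) (hg : ContinuousOn g s) :
    ContinuousOn (fun x => f x * g x) s :=
  (continuous_fst.matrix_mul continuous_snd).comp_continuousOn (hf.prodMk hg)

theorem ContinuousOn.matrix_transpose {X m n : Type*} [TopologicalSpace X] {f : X → Matrix m n ℝ}
    {s : Set X} (hf : ContinuousOn f s) : ContinuousOn (fun x => (f x)ᵀ) s :=
  continuous_id.matrix_transpose.comp_continuousOn hf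

theorem ContinuousOn.hasDerivAt_integral_of_lt {E : Type*} [NormedAddCommGroup E]
    [NormedSpace ℝ E] [CompleteSpace E] {f : ℝ → E} {a t : ℝ}
    (hf : ContinuousOn f (Set.Ici a)) (ht : a < t) :
    HasDerivAt (fun τ => ∫ u in a..τ, f u) (f t) t :=
  intervalIntegral.integral_hasDerivAt_right
    (hf.mono (Set.uIcc_of_le ht.le ▸ Set.Icc_subset_Ici_self)).intervalIntegrable
    ((hf.mono Set.Ioi_subset_Ici_self).stronglyMeasurableAtFilter isOpen_Ioi t ht)
    (hf.continuousAt (Ici_mem_nhds ht))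

section EvolutionFamily

variable {n k : Type*} [Fintype n] [Fintype k]
  {S : ℝ → Matrix n k ℝ} {E κ Γ : ℝ → ℝ → Matrix n n ℝ}

noncomputable def controllabilityGramian (E : ℝ → ℝ → Matrix n n ℝ) (S : ℝ → Matrix n k ℝ)
    (τ : ℝ) : Matrix n n ℝ :=
  ∫ u in 0..τ, E 0 u * S u * (S u)ᵀ * (E 0 u)ᵀ

theorem kalman_zero_eq_conj_controllabilityGramian
    (hEmul : ∀ r s t : ℝ, 0 ≤ r → 0 ≤ s → 0 ≤ t → E t s * E s r = E t r)
    (hκ : ∀ s t : ℝ, 0 ≤ s → s ≤ t → κ s t = ∫ u in s..t, E t u * S u * (S u)ᵀ * (E t u)ᵀ)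
    (hcont : ContinuousOn (fun u => E 0 u * S u * (S u)ᵀ * (E 0 u)ᵀ) (Set.Ici 0))
    {τ : ℝ} (hτ : 0 ≤ τ) :
    κ 0 τ = E τ 0 * controllabilityGramian E S τ * (E τ 0)ᵀ := by
  have hsplit : ∀ u ∈ Set.uIcc 0 τ, E τ u * S u * (S u)ᵀ * (E τ u)ᵀ
      = E τ 0 * (E 0 u * S u * (S u)ᵀ * (E 0 u)ᵀ) * (E τ 0)ᵀ := by
    intro u hu
    rw [Set.uIcc_of_le hτ] at hu
    rw [← hEmul u 0 τ hu.1 le_rfl hτ, transpose_mul]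
    simp only [Matrix.mul_assoc]
  rw [hκ 0 τ le_rfl hτ, intervalIntegral.integral_congr hsplit,
    Matrix.intervalIntegral_mul_mul_s9 _ _ (hcont.mono (Set.uIcc_of_le hτ ▸ Set.Icc_subset_Ici_self))]
  rfl

theorem gamma_zero_eq_controllabilityGramian_mul [DecidableEq n]
    (hEid : ∀ t : ℝ, 0 ≤ t → E t t = 1)
    (hEmul : ∀ r s t : ℝ, 0 ≤ r → 0 ≤ s → 0 ≤ t → E t s * E s r = E t r)
    (hκ : ∀ s t : ℝ, 0 ≤ s → s ≤ t → κ s t = ∫ u in s..t, E t u * S u * (S u)ᵀ * (E t u)ᵀ)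
    (hΓ : ∀ s t : ℝ, 0 ≤ s → s ≤ t → Γ s t = E s t * κ s t)
    (hcont : ContinuousOn (fun u => E 0 u * S u * (S u)ᵀ * (E 0 u)ᵀ) (Set.Ici 0))
    {τ : ℝ} (hτ : 0 ≤ τ) :
    Γ 0 τ = controllabilityGramian E S τ * (E τ 0)ᵀ := by
  rw [hΓ 0 τ le_rfl hτ, kalman_zero_eq_conj_controllabilityGramian hEmul hκ hcont hτ,
    ← Matrix.mul_assoc, ← Matrix.mul_assoc, hEmul 0 τ 0 le_rfl hτ le_rfl, hEid 0 le_rfl,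
    Matrix.one_mul]

end EvolutionFamily

theorem gamma_second_partial_derivative_general
    {d p : ℕ}
    (Q : ℝ → Matrix (Fin d) (Fin d) ℝ) (S : ℝ → Matrix (Fin d) (Fin p) ℝ)
    (hS : ContinuousOn S (Set.Ici 0))
    (E : ℝ → ℝ → Matrix (Fin d) (Fin d) ℝ)
    (hEcont : ContinuousOn (fun x : ℝ × ℝ => E x.1 x.2) (Set.Ici 0 ×ˢ Set.Ici 0))
    (hEid : ∀ t : ℝ, 0 ≤ t → E t t = 1)
    (hEmul : ∀ r s t : ℝ, 0 ≤ r → 0 ≤ s → 0 ≤ t → E t s * E s r = E t r)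
    (hEderiv : ∀ s : ℝ, 0 ≤ s → ∀ t : ℝ, 0 ≤ t →
      HasDerivAt (fun τ => E τ s) (Q t * E t s) t)
    (κ Γ : ℝ → ℝ → Matrix (Fin d) (Fin d) ℝ)
    (hκ : ∀ s t : ℝ, 0 ≤ s → s ≤ t →
      κ s t = ∫ u in s..t, E t u * S u * (S u)ᵀ * (E t u)ᵀ)
    (hΓ : ∀ s t : ℝ, 0 ≤ s → s ≤ t → Γ s t = E s t * κ s t)
    (T : ℝ) :
    ∀ t : ℝ, 0 < t → t < T →
      HasDerivAt (fun τ => Γ 0 τ) (Γ 0 t * (Q t)ᵀ + E 0 t * (S t * (S t)ᵀ)) t := by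
  intro t ht _
  have hE0 : ContinuousOn (fun u => E 0 u) (Set.Ici 0) :=
    hEcont.comp (continuous_const.prodMk continuous_id).continuousOn
      fun u hu => ⟨Set.mem_Ici.2 le_rfl, hu⟩
  have hcont : ContinuousOn (fun u => E 0 u * S u * (S u)ᵀ * (E 0 u)ᵀ) (Set.Ici 0) :=
    ((hE0.matrix_mul hS).matrix_mul hS.matrix_transpose).matrix_mul hE0.matrix_transpose
  have hΓW : ∀ τ, 0 ≤ τ → Γ 0 τ = controllabilityGramian E S τ * (E τ 0)ᵀ :=
    fun _ => gamma_zero_eq_controllabilityGramian_mul hEid hEmul hκ hΓ hcont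
  have hW : HasDerivAt (controllabilityGramian E S) _ t := hcont.hasDerivAt_integral_of_lt ht
  have hEinv : (E 0 t)ᵀ * (E t 0)ᵀ = 1 := by
    rw [← transpose_mul, hEmul t 0 t ht.le le_rfl ht.le, hEid t ht.le, transpose_one]
  have hderiv : Γ 0 t * (Q t)ᵀ + E 0 t * (S t * (S t)ᵀ)
      = controllabilityGramian E S t * (Q t * E t 0)ᵀ
        + E 0 t * S t * (S t)ᵀ * (E 0 t)ᵀ * (E t 0)ᵀ := by
    rw [hΓW t ht.le, transpose_mul (Q t), Matrix.mul_assoc _ (E 0 t)ᵀ, hEinv, Matrix.mul_one,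
      Matrix.mul_assoc (E 0 t), Matrix.mul_assoc (controllabilityGramian E S t)]
  rw [hderiv]
  exact (hW.matrix_mul (hEderiv 0 le_rfl t ht.le).matrix_transpose).congr_of_eventuallyEq
    (eventually_of_mem (Ioi_mem_nhds ht) fun τ hτ => hΓW τ hτ.le)

/-- Identity (SEGED22): for `t ∈ (0,T)`, the map `τ ↦ Γ(0,τ)` is differentiable at `t`
with `∂₂Γ(0,t) = Γ(0,t) Q(t)ᵀ + E(0,t) S(t)S(t)ᵀ`. -/
theorem gamma_second_partial_derivative
    {d p : ℕ} (hd : 1 ≤ d)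
    (Q : ℝ → Matrix (Fin d) (Fin d) ℝ) (S : ℝ → Matrix (Fin d) (Fin p) ℝ)
    (hQ : ContinuousOn Q (Set.Ici 0)) (hS : ContinuousOn S (Set.Ici 0))
    (E : ℝ → ℝ → Matrix (Fin d) (Fin d) ℝ)
    (hEcont : ContinuousOn (fun x : ℝ × ℝ => E x.1 x.2) (Set.Ici 0 ×ˢ Set.Ici 0))
    (hEid : ∀ t : ℝ, 0 ≤ t → E t t = 1)
    (hEmul : ∀ r s t : ℝ, 0 ≤ r → 0 ≤ s → 0 ≤ t → E t s * E s r = E t r)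
    (hEderiv : ∀ s : ℝ, 0 ≤ s → ∀ t : ℝ, 0 ≤ t →
      HasDerivAt (fun τ => E τ s) (Q t * E t s) t)
    (κ Γ : ℝ → ℝ → Matrix (Fin d) (Fin d) ℝ)
    (hκ : ∀ s t : ℝ, 0 ≤ s → s ≤ t →
      κ s t = ∫ u in s..t, E t u * S u * (S u)ᵀ * (E t u)ᵀ)
    (hΓ : ∀ s t : ℝ, 0 ≤ s → s ≤ t → Γ s t = E s t * κ s t)
    (T : ℝ) (hT : 0 < T) :
    ∀ t : ℝ, 0 < t → t < T →
      HasDerivAt (fun τ => Γ 0 τ) (Γ 0 t * (Q t)ᵀ + E 0 t * (S t * (S t)ᵀ)) t :=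
  gamma_second_partial_derivative_general Q S hS E hEcont hEid hEmul hEderiv κ Γ hκ hΓ T
end

section
/- For all 0 ≤ s < t < T and all x, y ∈ ℝ one has p_{t−s}(x,y) · p_{T−t}(y,0) / p_{T−s}(x,0) = (2π σ(s,t))^{−1/2} exp( −( y − (sinh(q(T−t))/sinh(q(T−s))) x )² / (2σ(s,t)) ), where σ(s,t) = (σ²/q) · sinh(q(T−t)) sinh(q(t−s)) / sinh(q(T−s)); that is, as a function of y the left-hand side is the Gaussian density with mean (sinh(q(T−t))/sinh(q(T−s))) x and variance σ(s,t). -/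
/-! Write `A = σ²κ(t-s)`, `B = σ²κ(T-t)`, `C = σ²κ(T-s)`, `u = e^{q(t-s)}` and
`v = e^{q(T-t)}`. Each `p` is a Gaussian density, and `C = B + v²A`: the variances compose as for
`X_T = v X_t + (independent noise)`. Completing the square in `y`, the ratio is a Gaussian in `y`
with precision `1/A + v²/B = C/(AB)`, hence variance `AB/C` and mean `uBx/C`; substituting
`κ(r) = e^{qr} sinh(qr)/q` turns these into the sinh expressions. -/

open Real ProbabilityTheory

lemma gaussianPDFReal_toNNReal {v : ℝ} (hv : 0 ≤ v) (m y : ℝ) :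
    gaussianPDFReal m v.toNNReal y = (√(2 * π * v))⁻¹ * exp (-(y - m) ^ 2 / (2 * v)) := by
  rw [gaussianPDFReal, Real.coe_toNNReal v hv]

lemma gaussianPDFReal_mul_div_gaussianPDFReal {A B C : ℝ} (hA : 0 < A) (hB : 0 < B) {u v : ℝ}
    (hC : C = B + v ^ 2 * A) (x y : ℝ) :
    gaussianPDFReal (u * x) A.toNNReal y * gaussianPDFReal (v * y) B.toNNReal 0 /
        gaussianPDFReal (u * v * x) C.toNNReal 0
      = gaussianPDFReal (u * B / C * x) (A * B / C).toNNReal y := by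
  have hC0 : 0 < C := hC ▸ by positivity
  have hV : 0 < A * B / C := by positivity
  simp only [gaussianPDFReal_toNNReal hA.le, gaussianPDFReal_toNNReal hB.le,
    gaussianPDFReal_toNNReal hC0.le, gaussianPDFReal_toNNReal hV.le]
  have hvar : (2 * π * A) * (2 * π * B) = (2 * π * C) * (2 * π * (A * B / C)) := by
    field_simp
  have hsqrt : √(2 * π * (A * B / C)) = √(2 * π * A) * √(2 * π * B) / √(2 * π * C) := by
    rw [← sqrt_mul (by positivity), hvar, sqrt_mul (by positivity) (2 * π * (A * B / C)),
      mul_div_cancel_left₀ _ (by positivity)]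
  have hexp : -(y - u * x) ^ 2 / (2 * A) + -(0 - v * y) ^ 2 / (2 * B)
        - -(0 - u * v * x) ^ 2 / (2 * C) = -(y - u * B / C * x) ^ 2 / (2 * (A * B / C)) := by
    subst hC
    field_simp
    ring
  rw [← hexp, exp_sub, exp_add, hsqrt]
  field_simp

noncomputable def ouKappa (q t : ℝ) : ℝ := (exp (2 * q * t) - 1) / (2 * q)

lemma ouKappa_eq_exp_mul_sinh_div {q : ℝ} (hq : q ≠ 0) (t : ℝ) :
    ouKappa q t = exp (q * t) * sinh (q * t) / q := by
  rw [ouKappa, sinh_eq, exp_neg, show 2 * q * t = q * t + q * t by ring, exp_add]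
  field_simp

lemma ouKappa_pos {q t : ℝ} (hq : q ≠ 0) (ht : 0 < t) : 0 < ouKappa q t := by
  rw [ouKappa]
  rcases hq.lt_or_gt with hneg | hpos
  · exact div_pos_of_neg_of_neg (sub_neg.2 (exp_lt_one_iff.2 (by nlinarith))) (by linarith)
  · exact div_pos (sub_pos.2 (one_lt_exp_iff.2 (by positivity))) (by linarith)

lemma sq_mul_ouKappa_pos {q σ t : ℝ} (hq : q ≠ 0) (hσ : σ ≠ 0) (ht : 0 < t) :
    0 < σ ^ 2 * ouKappa q t :=
  mul_pos (by positivity) (ouKappa_pos hq ht)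

lemma ouKappa_add (q a b : ℝ) :
    ouKappa q (a + b) = ouKappa q b + exp (q * b) ^ 2 * ouKappa q a := by
  rw [ouKappa, ouKappa, ouKappa, ← exp_nat_mul, mul_add, exp_add]
  push_cast
  ring_nf

lemma ou_bridge_mean_eq {q σ a b : ℝ} (hq : q ≠ 0) (hσ : σ ≠ 0) (hab : a + b ≠ 0) :
    exp (q * a) * (σ ^ 2 * ouKappa q b) / (σ ^ 2 * ouKappa q (a + b))
      = sinh (q * b) / sinh (q * (a + b)) := by
  have hsinh : sinh (q * (a + b)) ≠ 0 := sinh_ne_zero.2 (mul_ne_zero hq hab)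
  simp only [ouKappa_eq_exp_mul_sinh_div hq, mul_add, exp_add]
  field_simp

lemma ou_bridge_variance_eq {q a b : ℝ} (hq : q ≠ 0) (σ : ℝ) (hab : a + b ≠ 0) :
    σ ^ 2 * ouKappa q a * (σ ^ 2 * ouKappa q b) / (σ ^ 2 * ouKappa q (a + b))
      = σ ^ 2 / q * (sinh (q * b) * sinh (q * a) / sinh (q * (a + b))) := by
  have hsinh : sinh (q * (a + b)) ≠ 0 := sinh_ne_zero.2 (mul_ne_zero hq hab)
  simp only [ouKappa_eq_exp_mul_sinh_div hq, mul_add, exp_add]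
  field_simp

theorem gaussianPDFReal_ou_bridge {q σ a b : ℝ} (hq : q ≠ 0) (hσ : σ ≠ 0) (ha : 0 < a)
    (hb : 0 < b) (x y : ℝ) :
    gaussianPDFReal (exp (q * a) * x) (σ ^ 2 * ouKappa q a).toNNReal y *
        gaussianPDFReal (exp (q * b) * y) (σ ^ 2 * ouKappa q b).toNNReal 0 /
        gaussianPDFReal (exp (q * (a + b)) * x) (σ ^ 2 * ouKappa q (a + b)).toNNReal 0
      = gaussianPDFReal (sinh (q * b) / sinh (q * (a + b)) * x)
          (σ ^ 2 / q * (sinh (q * b) * sinh (q * a) / sinh (q * (a + b)))).toNNReal y := by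
  have hab : a + b ≠ 0 := (add_pos ha hb).ne'
  have hC : σ ^ 2 * ouKappa q (a + b)
      = σ ^ 2 * ouKappa q b + exp (q * b) ^ 2 * (σ ^ 2 * ouKappa q a) := by
    rw [ouKappa_add]; ring
  rw [show exp (q * (a + b)) = exp (q * a) * exp (q * b) by rw [mul_add, exp_add],
    gaussianPDFReal_mul_div_gaussianPDFReal (sq_mul_ouKappa_pos hq hσ ha)
      (sq_mul_ouKappa_pos hq hσ hb) hC, ou_bridge_mean_eq hq hσ hab,
    ou_bridge_variance_eq hq σ hab]

theorem OU_bridge_densities_general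
    (q σ T : ℝ) (hq : q ≠ 0) (hσ : σ ≠ 0)
    (κq : ℝ → ℝ) (hκq : ∀ t : ℝ, κq t = (Real.exp (2 * q * t) - 1) / (2 * q))
    (p : ℝ → ℝ → ℝ → ℝ)
    (hp : ∀ (t x y : ℝ), 0 < t →
      p t x y = (Real.sqrt (2 * Real.pi * σ ^ 2 * κq t))⁻¹ *
        Real.exp (-(y - Real.exp (q * t) * x) ^ 2 / (2 * σ ^ 2 * κq t))) :
    ∀ (s t x y : ℝ), 0 ≤ s → s < t → t < T →
      p (t - s) x y * p (T - t) y 0 / p (T - s) x 0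
        = (Real.sqrt (2 * Real.pi *
            (σ ^ 2 / q * (Real.sinh (q * (T - t)) * Real.sinh (q * (t - s)) /
              Real.sinh (q * (T - s))))))⁻¹ *
          Real.exp (-(y - Real.sinh (q * (T - t)) / Real.sinh (q * (T - s)) * x) ^ 2 /
            (2 * (σ ^ 2 / q * (Real.sinh (q * (T - t)) * Real.sinh (q * (t - s)) /
              Real.sinh (q * (T - s)))))) := by
  rintro s t x y - hst htT
  obtain rfl : κq = ouKappa q := funext hκq
  have hgauss : ∀ r z w, 0 < r →
      p r z w = gaussianPDFReal (exp (q * r) * z) (σ ^ 2 * ouKappa q r).toNNReal w := by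
    intro r z w hr
    rw [hp r z w hr, gaussianPDFReal_toNNReal (sq_mul_ouKappa_pos hq hσ hr).le]
    simp only [mul_assoc]
  have ha : 0 < t - s := by linarith
  have hb : 0 < T - t := by linarith
  have hV : 0 ≤ σ ^ 2 / q *
      (sinh (q * (T - t)) * sinh (q * (t - s)) / sinh (q * (t - s + (T - t)))) := by
    rw [← ou_bridge_variance_eq hq σ (add_pos ha hb).ne']
    exact (div_pos (mul_pos (sq_mul_ouKappa_pos hq hσ ha) (sq_mul_ouKappa_pos hq hσ hb))
      (sq_mul_ouKappa_pos hq hσ (add_pos ha hb))).le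
  rw [show T - s = t - s + (T - t) by ring, hgauss _ _ _ ha, hgauss _ _ _ hb,
    hgauss _ _ _ (add_pos ha hb), gaussianPDFReal_ou_bridge hq hσ ha hb,
    gaussianPDFReal_toNNReal hV]

/-- Identity (OU_bridge_densities): for the Ornstein–Uhlenbeck transition densities,
`p_{t−s}(x,y) p_{T−t}(y,0) / p_{T−s}(x,0)` is the Gaussian density with mean
`(sinh(q(T−t))/sinh(q(T−s))) x` and variance
`σ(s,t) = (σ²/q) sinh(q(T−t)) sinh(q(t−s)) / sinh(q(T−s))`. -/
theorem OU_bridge_densities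
    (q σ T : ℝ) (hq : q ≠ 0) (hσ : σ ≠ 0) (hT : 0 < T)
    (κq : ℝ → ℝ) (hκq : ∀ t : ℝ, κq t = (Real.exp (2 * q * t) - 1) / (2 * q))
    (p : ℝ → ℝ → ℝ → ℝ)
    (hp : ∀ (t x y : ℝ), 0 < t →
      p t x y = (Real.sqrt (2 * Real.pi * σ ^ 2 * κq t))⁻¹ *
        Real.exp (-(y - Real.exp (q * t) * x) ^ 2 / (2 * σ ^ 2 * κq t))) :
    ∀ (s t x y : ℝ), 0 ≤ s → s < t → t < T →
      p (t - s) x y * p (T - t) y 0 / p (T - s) x 0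
        = (Real.sqrt (2 * Real.pi *
            (σ ^ 2 / q * (Real.sinh (q * (T - t)) * Real.sinh (q * (t - s)) /
              Real.sinh (q * (T - s))))))⁻¹ *
          Real.exp (-(y - Real.sinh (q * (T - t)) / Real.sinh (q * (T - s)) * x) ^ 2 /
            (2 * (σ ^ 2 / q * (Real.sinh (q * (T - t)) * Real.sinh (q * (t - s)) /
              Real.sinh (q * (T - s)))))) :=
  OU_bridge_densities_general q σ T hq hσ κq hκq p hp
end
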